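/- For coprime positive integers p, q, let F(p,q) denote the closed disk of radius 1/(2q²) centered at (p/q, 1/(2q²)) (the Ford disk of the fraction p/q). For any two distinct pairs (p,q) ≠ (p',q') of coprime positive integers, the disks F(p,q) and F(p',q') have disjoint interiors; i.e., the Ford disks form a packing in the upper half-plane. -/

import Mathlib

open MeasureTheory Metric Set

noncomputable def pt (x y : ℝ) : EuclideanSpace ℝ (Fin 2) := WithLp.toLp 2 ![x, y]

noncomputable def fordDisk (p q : ℕ) : Set (EuclideanSpace ℝ (Fin 2)) :=
  closedBall (pt ((p : ℝ) / q) (1 / (2 * (q : ℝ) ^ 2))) (1 / (2 * (q : ℝ) ^ 2))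

/-!
The disks of radii `r = 1/(2q²)` and `r' = 1/(2q'²)` resting on the real axis at
`x = p/q` and `x' = p'/q'` have centers at squared distance `(x - x')² + (r - r')²`, while
`(r + r')² = (r - r')² + 4 r r'`. So the open disks are disjoint as soon as
`(x - x')² ≥ 4 r r' = 1/(q q')²`, i.e. `|p q' - p' q| ≥ 1`, which holds because distinct
reduced fractions have distinct cross products.
-/

lemma dist_pt (x y x' y' : ℝ) : dist (pt x y) (pt x' y') = √((x - x') ^ 2 + (y - y') ^ 2) := by
  rw [EuclideanSpace.dist_eq, Fin.sum_univ_two]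
  simp [pt, Real.dist_eq, sq_abs]

lemma add_le_dist_pt_of_mul_le {x r x' r' : ℝ} (h : 4 * r * r' ≤ (x - x') ^ 2) :
    r + r' ≤ dist (pt x r) (pt x' r') := by
  rw [dist_pt]
  apply Real.le_sqrt_of_sq_le
  nlinarith

lemma Nat.Coprime.eq_of_mul_eq_mul {p q p' q' : ℕ} (hpq : p.Coprime q) (hpq' : p'.Coprime q')
    (h : p * q' = p' * q) : p = p' ∧ q = q' := by
  have hq : q = q' := Nat.dvd_antisymm
    (hpq.symm.dvd_of_dvd_mul_left ⟨p', by rw [h, mul_comm]⟩)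
    (hpq'.symm.dvd_of_dvd_mul_left ⟨p, by rw [← h, mul_comm]⟩)
  subst hq
  rcases Nat.eq_zero_or_pos q with rfl | hq
  · rw [Nat.coprime_zero_right] at hpq hpq'
    exact ⟨hpq.trans hpq'.symm, rfl⟩
  · exact ⟨Nat.eq_of_mul_eq_mul_right hq h, rfl⟩

lemma one_div_sq_le_sq_sub_of_coprime {p q p' q' : ℕ} (hpq : p.Coprime q) (hpq' : p'.Coprime q')
    (hne : (p, q) ≠ (p', q')) :
    1 / ((q : ℝ) * q') ^ 2 ≤ ((p : ℝ) / q - p' / q') ^ 2 := by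
  -- a zero denominator makes the left side `1 / 0 = 0`
  rcases Nat.eq_zero_or_pos q with rfl | hq
  · simp [sq_nonneg]
  rcases Nat.eq_zero_or_pos q' with rfl | hq'
  · simp [sq_nonneg]
  have hcross : (p : ℤ) * q' - p' * q ≠ 0 := by
    intro h
    obtain ⟨rfl, rfl⟩ := hpq.eq_of_mul_eq_mul hpq' (by exact_mod_cast sub_eq_zero.mp h)
    exact hne rfl
  have hone : (1 : ℝ) ≤ ((p : ℝ) * q' - p' * q) ^ 2 := by
    have := (one_le_sq_iff_one_le_abs _).mpr (Int.one_le_abs hcross)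
    exact_mod_cast this
  calc 1 / ((q : ℝ) * q') ^ 2 ≤ ((p : ℝ) * q' - p' * q) ^ 2 / ((q : ℝ) * q') ^ 2 := by gcongr
    _ = ((p : ℝ) / q - p' / q') ^ 2 := by field_simp

theorem fordDisks_packing (p q p' q' : ℕ)
    (hpq : Nat.Coprime p q) (hpq' : Nat.Coprime p' q')
    (hne : (p, q) ≠ (p', q')) :
    Disjoint (interior (fordDisk p q)) (interior (fordDisk p' q')) := by
  rw [fordDisk, fordDisk, interior_closedBall', interior_closedBall']
  refine ball_disjoint_ball (add_le_dist_pt_of_mul_le ?_)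
  calc 4 * (1 / (2 * (q : ℝ) ^ 2)) * (1 / (2 * (q' : ℝ) ^ 2)) = 1 / ((q : ℝ) * q') ^ 2 := by ring
    _ ≤ ((p : ℝ) / q - p' / q') ^ 2 := one_div_sq_le_sq_sub_of_coprime hpq hpq' hne
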